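/- arXiv:math/0104269 — 3 statements merged into one kernel-verified Lean document; each statement's English description precedes it below -/
import Mathlib

section
/- For φ ∈ 𝒟(ℝˢ) with ∫φ(ξ)dξ = 1 and ∫ξ^α φ(ξ)dξ = 0 for all multi-indices α with 1 ≤ |α| ≤ q, and for any smooth function f : ℝˢ → ℂ of polynomial growth together with all its derivatives, the difference ∫ f(x + εξ) φ(ξ) dξ − f(x) is O(ε^{q+1}) as ε → 0, uniformly for x in any compact set K ⊂ ℝˢ. -/
open MeasureTheory Filter

/-- The monomial `ξ^α = ∏ i, ξ i ^ α i` for a multi-index `α`. -/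
def mono (s : ℕ) (α : Fin s → ℕ) (ξ : Fin s → ℝ) : ℝ := ∏ i, ξ i ^ α i

lemma iteratedDerivWithin_eq_global {g : ℝ → ℂ} (hg : ContDiff ℝ (⊤ : ℕ∞) g) {S : Set ℝ}
    (hS : UniqueDiffOn ℝ S) {t : ℝ} (ht : t ∈ S) (k : ℕ) :
    iteratedDerivWithin k g S t = iteratedDeriv k g t := by
  have hk : ContDiff ℝ ((k : ℕ∞) : WithTop ℕ∞) g := hg.of_le (by exact_mod_cast le_top)
  have h := (contDiff_iff_ftaylorSeries.mp hk).hasFTaylorSeriesUpToOn S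
  rw [iteratedDerivWithin_eq_iteratedFDerivWithin, iteratedDeriv_eq_iteratedFDeriv,
    ← h.eq_iteratedFDerivWithin_of_uniqueDiffOn (by exact_mod_cast le_refl (k : ℕ∞)) hS ht]
  rfl

lemma iteratedDeriv_line {s : ℕ} (f : (Fin s → ℝ) → ℂ) (hf : ContDiff ℝ (⊤ : ℕ∞) f)
    (x w : Fin s → ℝ) (n : ℕ) (t : ℝ) :
    iteratedDeriv n (fun t => f (x + t • w)) t
      = iteratedFDeriv ℝ n f (x + t • w) (fun _ => w) := by
  induction n generalizing t with
  | zero => simp [iteratedDeriv_zero, iteratedFDeriv_zero_apply]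
  | succ n ih =>
    rw [iteratedDeriv_succ]
    have hcongr : iteratedDeriv n (fun t => f (x + t • w))
        = fun t => iteratedFDeriv ℝ n f (x + t • w) (fun _ => w) := funext fun t => ih t
    rw [hcongr]
    have h1 : HasDerivAt (fun t : ℝ => x + t • w) w t := by
      simpa using ((hasDerivAt_id t).smul_const w).const_add x
    have h2 : HasFDerivAt (iteratedFDeriv ℝ n f)
        (fderiv ℝ (iteratedFDeriv ℝ n f) (x + t • w)) (x + t • w) :=
      ((hf.differentiable_iteratedFDeriv (by
        exact lt_of_lt_of_le (by exact_mod_cast n.lt_succ_self : (n : WithTop ℕ∞) < (((n+1 : ℕ) : ℕ∞) : WithTop ℕ∞))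
          ((by exact_mod_cast le_top) : (((n+1 : ℕ) : ℕ∞) : WithTop ℕ∞) ≤ ((⊤ : ℕ∞) : WithTop ℕ∞)))) _).hasFDerivAt
    have h3 := h2.comp_hasDerivAt t h1
    have h4 := (ContinuousMultilinearMap.apply ℝ (fun _ : Fin n => (Fin s → ℝ)) ℂ
      (fun _ => w)).hasFDerivAt.comp_hasDerivAt t h3
    have h5 : deriv (fun t => (iteratedFDeriv ℝ n f (x + t • w)) fun _ => w) t
        = fderiv ℝ (iteratedFDeriv ℝ n f) (x + t • w) w (fun _ => w) := h4.deriv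
    rw [h5]
    rfl

lemma moment_vanish {s q : ℕ} (φ : (Fin s → ℝ) → ℂ) (hφc : Continuous φ)
    (hφsupp : HasCompactSupport φ)
    (hφmom : ∀ α : Fin s → ℕ, 1 ≤ (∑ i, α i) → (∑ i, α i) ≤ q →
      ∫ ξ, (mono s α ξ : ℂ) * φ ξ = 0)
    {k : ℕ} (hk1 : 1 ≤ k) (hkq : k ≤ q)
    (A : ContinuousMultilinearMap ℝ (fun _ : Fin k => (Fin s → ℝ)) ℂ) :
    ∫ ξ, (A fun _ => ξ) * φ ξ = 0 := by
  classical
  have hξsum : ∀ ξ : Fin s → ℝ, ∑ i : Fin s, ξ i • (Pi.single i 1 : Fin s → ℝ) = ξ := by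
    intro ξ
    have : ∀ i : Fin s, ξ i • (Pi.single i 1 : Fin s → ℝ) = Pi.single i (ξ i) := by
      intro i; rw [← Pi.single_smul, smul_eq_mul, mul_one]
    simp_rw [this]
    exact Finset.univ_sum_single ξ
  have hexp : ∀ ξ : Fin s → ℝ, (A fun _ => ξ)
      = ∑ r : Fin k → Fin s, (∏ j, ξ (r j)) • A (fun j => (Pi.single (r j) 1 : Fin s → ℝ)) := by
    intro ξ
    conv_lhs => rw [show (fun _ : Fin k => ξ) = (fun _ : Fin k => ∑ i : Fin s, ξ i • (Pi.single i 1 : Fin s → ℝ))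
      from funext fun _ => (hξsum ξ).symm]
    rw [show (A fun _ : Fin k => ∑ i : Fin s, ξ i • (Pi.single i 1 : Fin s → ℝ))
        = ∑ r : Fin k → Fin s, A fun j => ξ (r j) • (Pi.single (r j) 1 : Fin s → ℝ) from
      A.toMultilinearMap.map_sum (g := fun _ i => ξ i • (Pi.single i 1 : Fin s → ℝ))]
    exact Finset.sum_congr rfl fun r _ => A.map_smul_univ _ _
  have hint : ∀ r : Fin k → Fin s, Integrable fun ξ : Fin s → ℝ =>
      ((∏ j, ξ (r j)) • A (fun j => (Pi.single (r j) 1 : Fin s → ℝ))) * φ ξ := by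
    intro r
    refine Continuous.integrable_of_hasCompactSupport ?_ hφsupp.mul_left
    exact ((continuous_finset_prod _ fun j _ => (continuous_apply (r j) : Continuous fun ξ : Fin s → ℝ => ξ (r j))).smul continuous_const).mul hφc
  calc ∫ ξ, (A fun _ => ξ) * φ ξ
      = ∫ ξ, ∑ r : Fin k → Fin s,
          ((∏ j, ξ (r j)) • A (fun j => (Pi.single (r j) 1 : Fin s → ℝ))) * φ ξ := by
        simp_rw [hexp, Finset.sum_mul]
    _ = ∑ r : Fin k → Fin s, ∫ ξ,
          ((∏ j, ξ (r j)) • A (fun j => (Pi.single (r j) 1 : Fin s → ℝ))) * φ ξ :=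
        integral_finset_sum _ fun r _ => hint r
    _ = 0 := by
        refine Finset.sum_eq_zero fun r _ => ?_
        set α : Fin s → ℕ := fun i => (Finset.univ.filter fun j => r j = i).card with hα
        have hprod : ∀ ξ : Fin s → ℝ, (∏ j, ξ (r j)) = mono s α ξ := by
          intro ξ
          unfold mono
          rw [← Finset.prod_fiberwise_of_maps_to (fun j _ => Finset.mem_univ (r j))
            (fun j => ξ (r j))]
          refine Finset.prod_congr rfl fun i _ => ?_
          rw [Finset.prod_congr rfl (fun j hj => by rw [(Finset.mem_filter.mp hj).2]),
            Finset.prod_const]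
        have hsum : ∑ i, α i = k := by
          rw [hα]
          rw [← Finset.card_eq_sum_card_fiberwise (fun j _ => Finset.mem_univ (r j))]
          simp
        have hrw : ∀ ξ : Fin s → ℝ,
            ((∏ j, ξ (r j)) • A (fun j => (Pi.single (r j) 1 : Fin s → ℝ))) * φ ξ
            = A (fun j => (Pi.single (r j) 1 : Fin s → ℝ)) * ((mono s α ξ : ℂ) * φ ξ) := by
          intro ξ
          rw [smul_mul_assoc, Complex.real_smul, hprod]
          ring
        simp_rw [hrw]
        rw [MeasureTheory.integral_const_mul, hφmom α (hsum ▸ hk1) (hsum ▸ hkq), mul_zero]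

/-- if `φ` has unit integral and vanishing moments up to order `q`, and `f`
is smooth with all derivatives of polynomial growth, then
`∫ f(x + εξ) φ(ξ) dξ − f(x) = O(ε^{q+1})` uniformly on compact sets as `ε → 0⁺`. -/
theorem taylor_moment_estimate (s q : ℕ) (φ : (Fin s → ℝ) → ℂ)
    (hφsmooth : ContDiff ℝ (⊤ : ℕ∞) φ) (hφsupp : HasCompactSupport φ)
    (hφint : ∫ ξ, φ ξ = 1)
    (hφmom : ∀ α : Fin s → ℕ, 1 ≤ (∑ i, α i) → (∑ i, α i) ≤ q →
      ∫ ξ, (mono s α ξ : ℂ) * φ ξ = 0)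
    (f : (Fin s → ℝ) → ℂ) (hf : ContDiff ℝ (⊤ : ℕ∞) f)
    (hfgrowth : ∀ n : ℕ, ∃ C N : ℝ, ∀ x : Fin s → ℝ,
      ‖iteratedFDeriv ℝ n f x‖ ≤ C * (1 + ‖x‖) ^ N)
    (K : Set (Fin s → ℝ)) (hK : IsCompact K) :
    ∃ C : ℝ, ∀ᶠ ε : ℝ in nhdsWithin 0 (Set.Ioi 0), ∀ x ∈ K,
      ‖(∫ ξ, f (x + ε • ξ) * φ ξ) - f x‖ ≤ C * ε ^ (q + 1) := by
  classical
  have hφc : Continuous φ := hφsmooth.continuous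
  obtain ⟨R₀, hR₀⟩ := hφsupp.isBounded.subset_closedBall 0
  set R : ℝ := max R₀ 0 with hRdef
  have hRsupp : tsupport φ ⊆ Metric.closedBall 0 R :=
    hR₀.trans (Metric.closedBall_subset_closedBall (le_max_left _ _))
  have hR0 : (0:ℝ) ≤ R := le_max_right _ _
  obtain ⟨D₀, hD₀⟩ := hK.isBounded.subset_closedBall 0
  set D : ℝ := max D₀ 0 with hDdef
  have hKD : K ⊆ Metric.closedBall 0 D :=
    hD₀.trans (Metric.closedBall_subset_closedBall (le_max_left _ _))
  obtain ⟨M₀, hM₀⟩ := (isCompact_closedBall (0 : Fin s → ℝ) (D + R)).exists_bound_of_continuousOn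
    ((hf.continuous_iteratedFDeriv ((by exact_mod_cast le_top) : (((q+1 : ℕ) : ℕ∞) : WithTop ℕ∞) ≤ ((⊤ : ℕ∞) : WithTop ℕ∞))).continuousOn : ContinuousOn (iteratedFDeriv ℝ (q+1) f) (Metric.closedBall (0 : Fin s → ℝ) (D + R)))
  set M : ℝ := max M₀ 0 with hMdef
  have hM0 : (0:ℝ) ≤ M := le_max_right _ _
  have hM : ∀ y ∈ Metric.closedBall (0 : Fin s → ℝ) (D + R),
      ‖iteratedFDeriv ℝ (q+1) f y‖ ≤ M := fun y hy => (hM₀ y hy).trans (le_max_left _ _)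
  have hφint' : Integrable φ := hφc.integrable_of_hasCompactSupport hφsupp
  set Iφ : ℝ := ∫ ξ, ‖φ ξ‖ with hIφdef
  refine ⟨M * R ^ (q+1) * Iφ / (q.factorial : ℝ), ?_⟩
  filter_upwards [Ioc_mem_nhdsGT_of_mem (Set.mem_Ico.mpr ⟨le_refl (0:ℝ), zero_lt_one⟩)]
  rintro ε ⟨hε0, hε1⟩ x hx
  have hxD : ‖x‖ ≤ D := by simpa using hKD hx
  -- the Taylor polynomial
  set T : (Fin s → ℝ) → ℂ := fun ξ =>
    ∑ k ∈ Finset.range (q+1), ((k.factorial : ℝ)⁻¹ * ε ^ k) • iteratedFDeriv ℝ k f x (fun _ => ξ)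
    with hTdef
  -- pointwise Taylor estimate on the support of φ
  have key : ∀ ξ ∈ tsupport φ,
      ‖f (x + ε • ξ) - T ξ‖ ≤ M * (ε * R) ^ (q+1) / (q.factorial : ℝ) := by
    intro ξ hξ
    have hξR : ‖ξ‖ ≤ R := by simpa using hRsupp hξ
    set w : Fin s → ℝ := ε • ξ with hwdef
    set g : ℝ → ℂ := fun t => f (x + t • w) with hgdef
    have hgc : ContDiff ℝ (⊤ : ℕ∞) g :=
      hf.comp (contDiff_const.add (contDiff_id.smul contDiff_const))
    have hwR : ‖w‖ ≤ ε * R := by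
      rw [hwdef, norm_smul, Real.norm_eq_abs, abs_of_pos hε0]
      exact mul_le_mul_of_nonneg_left hξR hε0.le
    have hmem : ∀ y ∈ Set.Icc (0:ℝ) 1, x + y • w ∈ Metric.closedBall (0 : Fin s → ℝ) (D + R) := by
      rintro y ⟨hy0, hy1⟩
      rw [Metric.mem_closedBall, dist_zero_right]
      calc ‖x + y • w‖ ≤ ‖x‖ + ‖y • w‖ := norm_add_le _ _
        _ ≤ D + R := by
            refine add_le_add hxD ?_
            rw [norm_smul, Real.norm_eq_abs, abs_of_nonneg hy0]
            calc y * ‖w‖ ≤ 1 * (ε * R) :=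
              mul_le_mul hy1 hwR (norm_nonneg _) zero_le_one
              _ ≤ 1 * (1 * R) := by
                  refine mul_le_mul_of_nonneg_left ?_ zero_le_one
                  exact mul_le_mul_of_nonneg_right hε1 hR0
              _ = R := by ring
    have hbound : ∀ y ∈ Set.Icc (0:ℝ) 1,
        ‖iteratedDerivWithin (q+1) g (Set.Icc 0 1) y‖ ≤ M * (ε * R) ^ (q+1) := by
      intro y hy
      rw [iteratedDerivWithin_eq_global hgc (uniqueDiffOn_Icc zero_lt_one) hy (q+1),
        iteratedDeriv_line f hf x w (q+1) y]
      calc ‖iteratedFDeriv ℝ (q+1) f (x + y • w) (fun _ => w)‖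
          ≤ ‖iteratedFDeriv ℝ (q+1) f (x + y • w)‖ * ∏ _j : Fin (q+1), ‖w‖ :=
            ContinuousMultilinearMap.le_opNorm _ _
        _ ≤ M * (ε * R) ^ (q+1) := by
            rw [Finset.prod_const, Finset.card_univ, Fintype.card_fin]
            exact mul_le_mul (hM _ (hmem y hy)) (pow_le_pow_left₀ (norm_nonneg _) hwR _)
              (pow_nonneg (norm_nonneg _) _) hM0
    have htaylor := taylor_mean_remainder_bound (zero_le_one)
      ((hgc.of_le ((by exact_mod_cast le_top) : (q : WithTop ℕ∞) + 1 ≤ ((⊤ : ℕ∞) : WithTop ℕ∞))).contDiffOn)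
      (Set.mem_Icc.mpr ⟨zero_le_one, le_refl (1:ℝ)⟩) hbound
    have hg1 : g 1 = f (x + ε • ξ) := by rw [hgdef]; simp [hwdef]
    have hTay : taylorWithinEval g q (Set.Icc 0 1) 0 1 = T ξ := by
      rw [taylor_within_apply]
      refine Finset.sum_congr rfl fun k hk => ?_
      rw [iteratedDerivWithin_eq_global hgc (uniqueDiffOn_Icc zero_lt_one)
        (Set.left_mem_Icc.mpr zero_le_one) k, iteratedDeriv_line f hf x w k 0]
      have hx0 : x + (0:ℝ) • w = x := by simp
      rw [hx0]
      have hhom : (iteratedFDeriv ℝ k f x fun _ => w)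
          = ε ^ k • (iteratedFDeriv ℝ k f x fun _ => ξ) := by
        have := (iteratedFDeriv ℝ k f x).map_smul_univ (fun _ : Fin k => ε) (fun _ => ξ)
        rw [hwdef]
        simpa [Finset.prod_const] using this
      rw [hhom, smul_smul]
      congr 1
      ring
    calc ‖f (x + ε • ξ) - T ξ‖ = ‖g 1 - taylorWithinEval g q (Set.Icc 0 1) 0 1‖ := by
          rw [hg1, hTay]
      _ ≤ M * (ε * R) ^ (q+1) * (1 - 0) ^ (q+1) / (q.factorial : ℝ) := htaylor
      _ = M * (ε * R) ^ (q+1) / (q.factorial : ℝ) := by norm_num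
  -- integrability
  have hI1 : Integrable fun ξ : Fin s → ℝ => f (x + ε • ξ) * φ ξ := by
    refine Continuous.integrable_of_hasCompactSupport ?_ hφsupp.mul_left
    exact (hf.continuous.comp (continuous_const.add (continuous_id.const_smul ε))).mul hφc
  have hTcont : Continuous T := by
    refine continuous_finset_sum _ fun k _ => Continuous.fun_const_smul ?_ _
    exact (iteratedFDeriv ℝ k f x).coe_continuous.comp (continuous_pi fun _ => continuous_id)
  have hI2 : Integrable fun ξ : Fin s → ℝ => T ξ * φ ξ :=
    Continuous.integrable_of_hasCompactSupport (hTcont.mul hφc) hφsupp.mul_left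
  -- the Taylor polynomial integrates to f x against φ
  have hTint : ∫ ξ, T ξ * φ ξ = f x := by
    have hsummul : ∀ ξ : Fin s → ℝ, T ξ * φ ξ = ∑ k ∈ Finset.range (q+1),
        ((k.factorial : ℝ)⁻¹ * ε ^ k) • ((iteratedFDeriv ℝ k f x fun _ => ξ) * φ ξ) := by
      intro ξ
      rw [hTdef, Finset.sum_mul]
      exact Finset.sum_congr rfl fun k _ => smul_mul_assoc _ _ _
    simp_rw [hsummul]
    have hInt : ∀ k ∈ Finset.range (q+1), Integrable fun ξ : Fin s → ℝ =>
        ((k.factorial : ℝ)⁻¹ * ε ^ k) • ((iteratedFDeriv ℝ k f x fun _ => ξ) * φ ξ) := by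
      intro k _
      have hcont : Continuous fun ξ : Fin s → ℝ =>
          (iteratedFDeriv ℝ k f x fun _ => ξ) * φ ξ :=
        ((iteratedFDeriv ℝ k f x).coe_continuous.comp
          (continuous_pi fun _ => continuous_id)).mul hφc
      exact (hcont.integrable_of_hasCompactSupport hφsupp.mul_left).fun_smul _
    rw [integral_finset_sum _ hInt]
    rw [Finset.sum_eq_single 0]
    · rw [integral_smul]
      have h0 : ∀ ξ : Fin s → ℝ, (iteratedFDeriv ℝ 0 f x fun _ => ξ) * φ ξ = f x * φ ξ := by
        intro ξ; rw [iteratedFDeriv_zero_apply]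
      simp_rw [h0]
      rw [MeasureTheory.integral_const_mul, hφint, mul_one]
      simp
    · intro k hk hk0
      rw [integral_smul, moment_vanish φ hφc hφsupp hφmom (Nat.one_le_iff_ne_zero.mpr hk0)
        (Nat.lt_succ_iff.mp (Finset.mem_range.mp hk)), smul_zero]
    · intro h
      exact absurd (Finset.mem_range.mpr (Nat.succ_pos q)) h
  -- split the integral
  have hsplit : (∫ ξ, f (x + ε • ξ) * φ ξ) - f x = ∫ ξ, (f (x + ε • ξ) - T ξ) * φ ξ := by
    have : ∀ ξ : Fin s → ℝ, (f (x + ε • ξ) - T ξ) * φ ξ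
        = f (x + ε • ξ) * φ ξ - T ξ * φ ξ := fun ξ => sub_mul _ _ _
    simp_rw [this]
    rw [integral_sub hI1 hI2, hTint]
  rw [hsplit]
  have hb : ∀ ξ : Fin s → ℝ, ‖(f (x + ε • ξ) - T ξ) * φ ξ‖
      ≤ (M * (ε * R) ^ (q+1) / (q.factorial : ℝ)) * ‖φ ξ‖ := by
    intro ξ
    by_cases hξ : ξ ∈ tsupport φ
    · rw [norm_mul]
      exact mul_le_mul_of_nonneg_right (key ξ hξ) (norm_nonneg _)
    · rw [image_eq_zero_of_notMem_tsupport hξ]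
      simp
  calc ‖∫ ξ, (f (x + ε • ξ) - T ξ) * φ ξ‖
      ≤ ∫ ξ, (M * (ε * R) ^ (q+1) / (q.factorial : ℝ)) * ‖φ ξ‖ :=
        norm_integral_le_of_norm_le ((hφint'.norm).const_mul _) (Eventually.of_forall hb)
    _ = (M * (ε * R) ^ (q+1) / (q.factorial : ℝ)) * Iφ := by
        rw [MeasureTheory.integral_const_mul]
    _ = M * R ^ (q+1) * Iφ / (q.factorial : ℝ) * ε ^ (q+1) := by
        rw [mul_pow]; ring
end

section
/- Define R : 𝒟(ℝˢ) → ℂ by R(φ) := exp(i·exp(∫|φ(ξ)|² dξ)). Then for every φ ∈ 𝒟(ℝˢ) with φ ≠ 0, the function ε ↦ R(S_ε φ) satisfies |exp(∫|S_ε φ(ξ)|² dξ)| = exp(ε^{-s} ∫|φ|²), which is not O(ε^{-N}) for any N ∈ ℕ as ε → 0. -/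
open MeasureTheory Filter

noncomputable def Sscale (s : ℕ) (ε : ℝ) (φ : (Fin s → ℝ) → ℂ) : (Fin s → ℝ) → ℂ :=
  fun ξ => ((ε ^ s)⁻¹ : ℝ) • φ (ε⁻¹ • ξ)

/-- for `R(φ) = exp(i·exp(∫|φ|²))`, the inner quantity satisfies
`exp(∫|S_ε φ|²) = exp(ε^{-s}∫|φ|²)`, which is not `O(ε^{-N})` for any `N` as `ε → 0⁺`
when `φ ≠ 0` (Jelínek's counterexample computation). -/
theorem jelinek_counterexample_growth (s : ℕ) (hs : 0 < s)
    (φ : (Fin s → ℝ) → ℂ) (hφsmooth : ContDiff ℝ (⊤ : ℕ∞) φ) (hφsupp : HasCompactSupport φ)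
    (hφne : φ ≠ 0) :
    (∀ ε : ℝ, 0 < ε →
      Real.exp (∫ ξ, ‖Sscale s ε φ ξ‖ ^ 2)
        = Real.exp ((ε ^ s)⁻¹ * ∫ ξ, ‖φ ξ‖ ^ 2)) ∧
    ∀ N : ℕ, ¬ ((fun ε : ℝ => Real.exp ((ε ^ s)⁻¹ * ∫ ξ, ‖φ ξ‖ ^ 2))
        =O[nhdsWithin 0 (Set.Ioi 0)] fun ε : ℝ => (ε⁻¹) ^ N) := by
  have hC : 0 < ∫ ξ, ‖φ ξ‖ ^ 2 := by
    have hcont : Continuous fun ξ => ‖φ ξ‖ ^ 2 :=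
      (hφsmooth.continuous.norm.pow 2)
    have hsupp2 : HasCompactSupport fun ξ => ‖φ ξ‖ ^ 2 :=
      hφsupp.comp_left (g := fun z : ℂ => ‖z‖ ^ 2) (by simp)
    have hint : Integrable fun ξ => ‖φ ξ‖ ^ 2 :=
      hcont.integrable_of_hasCompactSupport hsupp2
    rw [integral_pos_iff_support_of_nonneg (fun ξ => by positivity) hint]
    have hsupp_eq : (Function.support fun ξ => ‖φ ξ‖ ^ 2) = {ξ | φ ξ ≠ 0} := by
      ext ξ; simp [Function.support, pow_eq_zero_iff]
    rw [hsupp_eq]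
    refine (IsOpen.measure_pos _ (isOpen_ne_fun hφsmooth.continuous continuous_const)) ?_
    obtain ⟨ξ, hξ⟩ : ∃ ξ, φ ξ ≠ 0 := by
      by_contra h; push_neg at h; exact hφne (funext h)
    exact ⟨ξ, hξ⟩
  constructor
  · intro ε hε
    congr 1
    have h1 : ∀ ξ, ‖Sscale s ε φ ξ‖ ^ 2 = ((ε ^ s)⁻¹) ^ 2 * ‖φ (ε⁻¹ • ξ)‖ ^ 2 := by
      intro ξ
      simp [Sscale, norm_smul, abs_of_pos hε, mul_pow]
    simp_rw [h1]
    rw [integral_const_mul]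
    rw [MeasureTheory.Measure.integral_comp_inv_smul_of_nonneg volume
        (fun ξ => ‖φ ξ‖ ^ 2) hε.le]
    simp only [Module.finrank_fintype_fun_eq_card, Fintype.card_fin, smul_eq_mul]
    rw [← mul_assoc]
    congr 1
    field_simp
  · intro N hO
    set C := ∫ ξ, ‖φ ξ‖ ^ 2 with hCdef
    have hO2 : (fun t : ℝ => Real.exp (((t⁻¹ : ℝ) ^ s)⁻¹ * C))
        =O[atTop] fun t : ℝ => ((t⁻¹)⁻¹ : ℝ) ^ N :=
      hO.comp_tendsto tendsto_inv_atTop_nhdsGT_zero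
    obtain ⟨c, hc⟩ := hO2.bound
    -- eventually exp (C * t^s) ≤ c * t^N
    have htend : Tendsto (fun t : ℝ => Real.exp (C * t) / t ^ N) atTop atTop := by
      have h1 : Tendsto (fun t : ℝ => Real.exp (C * t) / (C * t) ^ N) atTop atTop :=
        (Real.tendsto_exp_div_pow_atTop N).comp
          (tendsto_atTop_atTop_of_monotone (fun a b hab => by nlinarith)
            (fun b => ⟨b / C + 1, by nlinarith [hC, (div_lt_iff₀ hC).1 (lt_add_one (b / C))]⟩))
      have h2 := h1.const_mul_atTop (show (0:ℝ) < C ^ N by positivity)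
      refine h2.congr' ?_
      filter_upwards [eventually_gt_atTop 0] with t ht
      rw [mul_pow]
      field_simp
    have hev : ∀ᶠ t : ℝ in atTop, Real.exp (C * t) / t ^ N ≤ c := by
      filter_upwards [hc, eventually_ge_atTop 1] with t hct ht1
      have ht0 : (0:ℝ) < t := lt_of_lt_of_le one_pos ht1
      have hts : t ≤ t ^ s := le_self_pow₀ ht1 hs.ne'
      have hinv : ((t⁻¹ : ℝ) ^ s)⁻¹ = t ^ s := by
        rw [inv_pow, inv_inv]
      rw [hinv, inv_inv] at hct
      rw [Real.norm_eq_abs, abs_of_pos (Real.exp_pos _),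
        Real.norm_eq_abs, abs_of_pos (pow_pos ht0 N)] at hct
      have hle : Real.exp (C * t) ≤ Real.exp (t ^ s * C) := by
        apply Real.exp_le_exp.2; nlinarith
      rw [div_le_iff₀ (pow_pos ht0 N)]
      exact hle.trans hct
    obtain ⟨t, ht⟩ := ((htend.eventually_gt_atTop c).and hev).exists
    exact absurd ht.1 (not_lt.2 ht.2)
end

section
/- Let φ : (0,1] × Ω → 𝒟(ℝˢ) be a smooth bounded path with values in 𝒜_0(ℝˢ) such that for all multi-indices β with 1 ≤ |β| ≤ q and all multi-indices γ, sup_{x∈K}|∫ ξ^β ∂_x^γ φ(ε,x)(ξ) dξ| = O(ε^q) on each compact K (type [A_l^∞]_{K,q}). Then for any polynomial p of degree ≤ q, the representative R(ψ,x) := ∫ p(y) ψ(y − x) dy − p(x) satisfies sup_{x∈K} |R(S_ε φ(ε,x), x)| = O(ε^q) as ε → 0. -/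
open MeasureTheory Filter

open MvPolynomial

private lemma eval_aeval' {s : ℕ} (p : MvPolynomial (Fin s) ℂ)
    (g : Fin s → MvPolynomial (Fin s) ℂ) (a : Fin s → ℂ) :
    eval a (aeval g p) = eval (fun i => eval a (g i)) p := by
  induction p using MvPolynomial.induction_on with
  | C c => simp
  | add u v hu hv => rw [map_add, map_add, hu, hv, map_add]
  | mul_X u i hu => rw [map_mul, map_mul, hu, aeval_X, map_mul, eval_X]

private lemma map_eval_aeval {s : ℕ} (p : MvPolynomial (Fin s) ℂ) (v : Option (Fin s) → ℂ) :
    MvPolynomial.map (eval v)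
        (aeval (fun i => (C (X (some i)) + C (X none) * X i :
          MvPolynomial (Fin s) (MvPolynomial (Option (Fin s)) ℂ))) p)
      = aeval (fun i => C (v (some i)) + C (v none) * X i) p := by
  induction p using MvPolynomial.induction_on with
  | C c => simp [aeval_C]
  | add u w hu hw => rw [map_add, map_add, hu, hw, map_add]
  | mul_X u i hu =>
      rw [map_mul, map_mul, hu, map_mul (aeval fun i => C (v (some i)) + C (v none) * X i), aeval_X]
      simp

private lemma totalDegree_aeval_le' {s : ℕ} (p : MvPolynomial (Fin s) ℂ)
    (g : Fin s → MvPolynomial (Fin s) (MvPolynomial (Option (Fin s)) ℂ))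
    (hg : ∀ i, (g i).totalDegree ≤ 1) :
    (aeval g p).totalDegree ≤ p.totalDegree := by
  have h1 : aeval g p = ∑ d ∈ p.support, aeval g (monomial d (coeff d p)) := by
    rw [← map_sum, support_sum_monomial_coeff]
  rw [h1]
  refine (totalDegree_finset_sum _ _).trans (Finset.sup_le fun d hd => ?_)
  rw [aeval_monomial]
  refine (totalDegree_mul _ _).trans ?_
  have hC : (algebraMap ℂ (MvPolynomial (Fin s) (MvPolynomial (Option (Fin s)) ℂ))
      (coeff d p)).totalDegree = 0 := by
    have : algebraMap ℂ (MvPolynomial (Fin s) (MvPolynomial (Option (Fin s)) ℂ))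
        (coeff d p) = C (C (coeff d p)) := rfl
    rw [this, totalDegree_C]
  rw [hC, zero_add]
  refine le_trans ?_ (le_totalDegree hd)
  unfold Finsupp.prod
  refine (totalDegree_finset_prod _ _).trans ?_
  calc ∑ i ∈ d.support, ((g i) ^ (d i)).totalDegree
      ≤ ∑ i ∈ d.support, d i * 1 := Finset.sum_le_sum fun i _ =>
        (totalDegree_pow _ _).trans (Nat.mul_le_mul_left _ (hg i))
    _ = d.sum fun _ e => e := by simp [Finsupp.sum]

/-- for a test object `Φ` of type `[A_l^∞]_{K,q}` (values in `𝒜₀` and all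
moments of order `1 ≤ |β| ≤ q` of all `x`-derivatives `O(ε^q)` uniformly on `K`), and any
polynomial `p` of total degree `≤ q`, the representative
`R(ψ,x) = ∫ p(y) ψ(y − x) dy − p(x)` of `ι(p) − σ(p)` satisfies
`sup_{x∈K} |R(S_ε Φ(ε,x), x)| = O(ε^q)` as `ε → 0⁺`. -/
theorem iota_minus_sigma_negligible_on_polynomials (s q : ℕ)
    (Ω : Set (Fin s → ℝ)) (hΩ : IsOpen Ω)
    (K : Set (Fin s → ℝ)) (hK : IsCompact K) (hKΩ : K ⊆ Ω)
    (Φ : ℝ → (Fin s → ℝ) → (Fin s → ℝ) → ℂ)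
    (hsm : ∀ ε ∈ Set.Ioc (0:ℝ) 1, ∀ x ∈ Ω, ContDiff ℝ (⊤ : ℕ∞) (Φ ε x))
    (hjoint : ∀ ξ, ContDiffOn ℝ (⊤ : ℕ∞) (fun p : ℝ × (Fin s → ℝ) => Φ p.1 p.2 ξ)
      (Set.Ioc (0:ℝ) 1 ×ˢ Ω))
    (hbddsupp : ∃ K₀ : Set (Fin s → ℝ), IsCompact K₀ ∧
      ∀ ε ∈ Set.Ioc (0:ℝ) 1, ∀ x ∈ Ω, tsupport (Φ ε x) ⊆ K₀)
    (hbdd : ∀ (n : ℕ) (L : Set (Fin s → ℝ)), IsCompact L → L ⊆ Ω →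
      ∃ C : ℝ, ∀ ε ∈ Set.Ioc (0:ℝ) 1, ∀ x ∈ L, ∀ ξ,
        ‖iteratedFDerivWithin ℝ n (fun x' => Φ ε x' ξ) Ω x‖ ≤ C)
    (hint : ∀ ε ∈ Set.Ioc (0:ℝ) 1, ∀ x ∈ Ω, ∫ ξ, Φ ε x ξ = 1)
    (hmom : ∀ β : Fin s → ℕ, 1 ≤ (∑ i, β i) → (∑ i, β i) ≤ q →
      ∀ (m : ℕ) (v : Fin m → (Fin s → ℝ)),
        ∃ C : ℝ, ∀ ε ∈ Set.Ioc (0:ℝ) 1, ∀ x ∈ K,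
          ‖∫ ξ, (mono s β ξ : ℂ)
              * iteratedFDerivWithin ℝ m (fun x' => Φ ε x' ξ) Ω x v‖ ≤ C * ε ^ q)
    (p : MvPolynomial (Fin s) ℂ) (hp : p.totalDegree ≤ q) :
    ∃ C : ℝ, ∀ᶠ ε : ℝ in nhdsWithin 0 (Set.Ioi 0), ∀ x ∈ K,
      ‖(∫ y, MvPolynomial.eval (fun i => (y i : ℂ)) p * Sscale s ε (Φ ε x) (y - x))
          - MvPolynomial.eval (fun i => (x i : ℂ)) p‖ ≤ C * ε ^ q := by
  classical
  obtain ⟨K₀, hK₀c, hsupp⟩ := hbddsupp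
  set G : Fin s → MvPolynomial (Fin s) (MvPolynomial (Option (Fin s)) ℂ) :=
    (fun i => C (X (some i)) + C (X none) * X i) with hGdef
  set P : MvPolynomial (Fin s) (MvPolynomial (Option (Fin s)) ℂ) := aeval G p with hPdef
  have hGdeg : ∀ i, (G i).totalDegree ≤ 1 := by
    intro i
    refine (totalDegree_add _ _).trans (max_le ?_ ?_)
    · simp
    · refine (totalDegree_mul _ _).trans ?_
      simp
  have hβq : ∀ β ∈ P.support, (∑ i, β i) ≤ q := by
    intro β hβ
    have h1 : (β.sum fun _ e => e) ≤ P.totalDegree := le_totalDegree hβ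
    have h2 : (∑ i, β i) = β.sum fun _ e => e :=
      (Finsupp.sum_fintype β (fun _ e => e) (fun _ => rfl)).symm
    rw [h2]
    exact h1.trans ((totalDegree_aeval_le' p G hGdeg).trans hp)
  set D : Finset (Fin s →₀ ℕ) := insert 0 P.support with hDdef
  have h0D : (0 : Fin s →₀ ℕ) ∈ D := Finset.mem_insert_self _ _
  -- variable assignment
  set vf : ℝ → (Fin s → ℝ) → Option (Fin s) → ℂ :=
    (fun ε x o => Option.elim o (ε : ℂ) (fun i => (x i : ℂ))) with hvfdef
  -- coefficient function
  set cf : (Fin s →₀ ℕ) → ℝ → (Fin s → ℝ) → ℂ :=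
    (fun β ε x => eval (vf ε x) (coeff β P)) with hcfdef
  -- the moment integral
  set If : (Fin s →₀ ℕ) → ℝ → (Fin s → ℝ) → ℂ :=
    (fun β ε x => ∫ ξ, (∏ i, ((ξ i : ℂ)) ^ (β i)) * Φ ε x ξ) with hIfdef
  -- coefficient identity and evaluation expansion
  have hcoeff : ∀ (ε : ℝ) (x : Fin s → ℝ) (β : Fin s →₀ ℕ),
      coeff β (aeval (fun i => C ((x i : ℂ)) + C ((ε : ℂ)) * X i) p) = cf β ε x := by
    intro ε x β
    have h := map_eval_aeval p (vf ε x)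
    simp only [hvfdef, Option.elim_none, Option.elim_some] at h
    rw [hcfdef]
    simp only [hvfdef]
    rw [hPdef, hGdef, ← h, coeff_map]
  have hEv : ∀ (ε : ℝ) (x : Fin s → ℝ) (w : Fin s → ℂ),
      eval (fun i => (x i : ℂ) + (ε : ℂ) * w i) p
        = ∑ β ∈ D, cf β ε x * ∏ i, w i ^ (β i) := by
    intro ε x w
    set Q : MvPolynomial (Fin s) ℂ := aeval (fun i => C ((x i : ℂ)) + C ((ε : ℂ)) * X i) p
      with hQ
    have h1 : eval (fun i => (x i : ℂ) + (ε : ℂ) * w i) p = eval w Q := by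
      rw [hQ, eval_aeval']
      simp
    have hsub : Q.support ⊆ D := by
      intro β hβ
      rw [mem_support_iff, hcoeff] at hβ
      have : coeff β P ≠ 0 := by
        intro h0
        apply hβ
        rw [hcfdef]
        simp only [h0, map_zero]
      exact Finset.mem_insert_of_mem (mem_support_iff.2 this)
    rw [h1, eval_eq' w Q]
    rw [Finset.sum_subset hsub (fun β _ hβ => by rw [notMem_support_iff.1 hβ, zero_mul])]
    exact Finset.sum_congr rfl fun β _ => by rw [hcoeff]
  -- uniform bound for coefficients
  have hcb : ∀ β : Fin s →₀ ℕ, ∃ M : ℝ, 0 ≤ M ∧ ∀ ε ∈ Set.Ioc (0:ℝ) 1, ∀ x ∈ K,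
      ‖cf β ε x‖ ≤ M := by
    intro β
    have hvc : Continuous fun z : ℝ × (Fin s → ℝ) => vf z.1 z.2 := by
      rw [hvfdef]
      refine continuous_pi fun o => ?_
      cases o with
      | none => exact Complex.continuous_ofReal.comp continuous_fst
      | some i =>
          exact Complex.continuous_ofReal.comp ((continuous_apply i).comp continuous_snd)
    have hcont : Continuous fun z : ℝ × (Fin s → ℝ) => cf β z.1 z.2 := by
      rw [hcfdef]
      exact (MvPolynomial.continuous_eval (p := coeff β P)).comp hvc
    obtain ⟨M, hM⟩ := (isCompact_Icc.prod hK).exists_bound_of_continuousOn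
      hcont.continuousOn
    refine ⟨max M 0, le_max_right _ _, fun ε hε x hx => ?_⟩
    exact le_trans (hM (ε, x) ⟨Set.Ioc_subset_Icc_self hε, hx⟩) (le_max_left _ _)
  -- moment bound
  have hIb : ∀ β ∈ D.erase 0, ∃ Cb : ℝ, ∀ ε ∈ Set.Ioc (0:ℝ) 1, ∀ x ∈ K,
      ‖If β ε x‖ ≤ Cb * ε ^ q := by
    intro β hβ
    have hβ0 : β ≠ 0 := (Finset.mem_erase.1 hβ).1
    have hβD : β ∈ D := (Finset.mem_erase.1 hβ).2
    have hβP : β ∈ P.support := by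
      rcases Finset.mem_insert.1 hβD with h | h
      · exact absurd h hβ0
      · exact h
    have hle : (∑ i, β i) ≤ q := hβq β hβP
    have hge : 1 ≤ ∑ i, β i := by
      by_contra h
      push_neg at h
      have hz : (∑ i, β i) = 0 := by omega
      exact hβ0 (Finsupp.ext fun i =>
        (Finset.sum_eq_zero_iff.1 hz) i (Finset.mem_univ i))
    obtain ⟨Cb, hCb⟩ := hmom (fun i => β i) hge hle 0 (fun i => i.elim0)
    refine ⟨Cb, fun ε hε x hx => ?_⟩
    have hb := hCb ε hε x hx
    have heq : (fun ξ : Fin s → ℝ => (mono s (fun i => β i) ξ : ℂ) *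
        iteratedFDerivWithin ℝ 0 (fun x' => Φ ε x' ξ) Ω x (fun i => i.elim0))
        = fun ξ : Fin s → ℝ => (∏ i, ((ξ i : ℂ)) ^ (β i)) * Φ ε x ξ := by
      funext ξ
      rw [iteratedFDerivWithin_zero_apply]
      congr 1
      rw [mono]
      push_cast
      rfl
    rw [heq] at hb
    rw [hIfdef]
    exact hb
  -- key identity
  have key : ∀ ε ∈ Set.Ioc (0:ℝ) 1, ∀ x ∈ K,
      (∫ y, eval (fun i => (y i : ℂ)) p * Sscale s ε (Φ ε x) (y - x))
        - eval (fun i => (x i : ℂ)) p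
      = ∑ β ∈ D.erase 0, cf β ε x * If β ε x := by
    intro ε hε x hx
    have hε0 : 0 < ε := hε.1
    have hεs : (0:ℝ) < ε ^ s := pow_pos hε0 s
    set φ : (Fin s → ℝ) → ℂ := Φ ε x with hφ
    have hφc : Continuous φ := (hsm ε hε x (hKΩ hx)).continuous
    have hφsupp : HasCompactSupport φ :=
      IsCompact.of_isClosed_subset hK₀c (isClosed_tsupport _) (hsupp ε hε x (hKΩ hx))
    set g : (Fin s → ℝ) → ℂ :=
      fun ξ => eval (fun i => (x i : ℂ) + (ε : ℂ) * (ξ i : ℂ)) p * φ ξ with hg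
    have hIint : ∀ β : Fin s →₀ ℕ,
        Integrable (fun ξ : Fin s → ℝ => (∏ i, ((ξ i : ℂ)) ^ (β i)) * φ ξ) := by
      intro β
      have hc : Continuous fun ξ : Fin s → ℝ => (∏ i, ((ξ i : ℂ)) ^ (β i)) :=
        continuous_finset_prod _ fun i _ =>
          (Complex.continuous_ofReal.comp (continuous_apply i)).pow _
      exact (hc.mul hφc).integrable_of_hasCompactSupport hφsupp.mul_left
    have hcov : (∫ y, eval (fun i => (y i : ℂ)) p * Sscale s ε φ (y - x)) = ∫ ξ, g ξ := by
      have h1 : ∀ y : Fin s → ℝ, eval (fun i => (y i : ℂ)) p * Sscale s ε φ (y - x)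
          = ((ε ^ s)⁻¹ : ℝ) • g (ε⁻¹ • (y - x)) := by
        intro y
        have hy : (fun i => ((x i : ℂ) + (ε : ℂ) * (((ε⁻¹ • (y - x)) i : ℝ) : ℂ)))
            = fun i => ((y i : ℂ)) := by
          funext i
          have hri : x i + ε * ((ε⁻¹ • (y - x)) i) = y i := by
            simp only [Pi.smul_apply, Pi.sub_apply, smul_eq_mul]
            field_simp
            ring
          calc (x i : ℂ) + (ε : ℂ) * (((ε⁻¹ • (y - x)) i : ℝ) : ℂ)
              = ((x i + ε * ((ε⁻¹ • (y - x)) i) : ℝ) : ℂ) := by push_cast; ring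
            _ = ((y i : ℂ)) := by rw [hri]
        simp only [hg, Sscale]
        rw [hy, mul_smul_comm]
      simp only [h1]
      rw [integral_smul]
      rw [integral_sub_right_eq_self (fun z => g (ε⁻¹ • z)) x]
      rw [MeasureTheory.Measure.integral_comp_smul volume g ε⁻¹]
      rw [Module.finrank_fin_fun]
      rw [inv_pow, inv_inv, abs_of_pos hεs, smul_smul, inv_mul_cancel₀ hεs.ne', one_smul]
    have hexp : (∫ ξ, g ξ) = ∑ β ∈ D, cf β ε x * If β ε x := by
      have h2 : ∀ ξ : Fin s → ℝ,
          g ξ = ∑ β ∈ D, cf β ε x * ((∏ i, ((ξ i : ℂ)) ^ (β i)) * φ ξ) := by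
        intro ξ
        simp only [hg]
        rw [hEv ε x (fun i => (ξ i : ℂ)), Finset.sum_mul]
        exact Finset.sum_congr rfl fun β _ => by ring
      simp only [h2]
      rw [integral_finset_sum D (fun β _ => (hIint β).const_mul _)]
      exact Finset.sum_congr rfl fun β _ => by
        rw [hIfdef]; exact integral_const_mul _ _
    have hpx : eval (fun i => (x i : ℂ)) p = ∑ β ∈ D, cf β ε x * ∏ i, (0:ℂ) ^ (β i) := by
      have h0 := hEv ε x (fun _ => 0)
      simpa using h0
    rw [hcov, hexp, hpx, ← Finset.sum_sub_distrib]
    rw [← Finset.add_sum_erase D _ h0D]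
    have hI0 : If 0 ε x = 1 := by
      rw [hIfdef]
      simp only [Finsupp.coe_zero, Pi.zero_apply, pow_zero, Finset.prod_const_one, one_mul]
      exact hint ε hε x (hKΩ hx)
    have hz0 : (∏ i, (0:ℂ) ^ ((0 : Fin s →₀ ℕ) i)) = 1 := by simp
    have hterm : ∀ β ∈ D.erase 0,
        cf β ε x * If β ε x - cf β ε x * ∏ i, (0:ℂ) ^ (β i) = cf β ε x * If β ε x := by
      intro β hβ
      have hβ0 : β ≠ 0 := (Finset.mem_erase.1 hβ).1
      obtain ⟨i, hi⟩ : ∃ i, β i ≠ 0 := by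
        by_contra h
        push_neg at h
        exact hβ0 (Finsupp.ext fun i => h i)
      rw [Finset.prod_eq_zero (Finset.mem_univ i) (zero_pow hi), mul_zero, sub_zero]
    rw [Finset.sum_congr rfl hterm, hI0, hz0, mul_one, sub_self, zero_add]
  -- assemble the constant
  choose Mf hMf0 hMf using hcb
  have hIb' : ∀ β : Fin s →₀ ℕ, ∃ Cb : ℝ, ∀ ε ∈ Set.Ioc (0:ℝ) 1, ∀ x ∈ K,
      β ∈ D.erase 0 → ‖If β ε x‖ ≤ Cb * ε ^ q := by
    intro β
    by_cases hβ : β ∈ D.erase 0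
    · obtain ⟨Cb, hCb⟩ := hIb β hβ
      exact ⟨Cb, fun ε hε x hx _ => hCb ε hε x hx⟩
    · exact ⟨0, fun ε hε x hx h => absurd h hβ⟩
  choose Cf hCf using hIb'
  refine ⟨∑ β ∈ D.erase 0, Mf β * max (Cf β) 0, ?_⟩
  filter_upwards [Ioc_mem_nhdsGT one_pos] with ε hε
  intro x hx
  rw [key ε hε x hx]
  have hεq : 0 < ε ^ q := pow_pos hε.1 q
  calc ‖∑ β ∈ D.erase 0, cf β ε x * If β ε x‖
      ≤ ∑ β ∈ D.erase 0, ‖cf β ε x * If β ε x‖ := norm_sum_le _ _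
    _ ≤ ∑ β ∈ D.erase 0, (Mf β * max (Cf β) 0) * ε ^ q := by
        refine Finset.sum_le_sum fun β hβ => ?_
        rw [norm_mul]
        have h1 : ‖cf β ε x‖ ≤ Mf β := hMf β ε hε x hx
        have h2 : ‖If β ε x‖ ≤ max (Cf β) 0 * ε ^ q :=
          le_trans (hCf β ε hε x hx hβ)
            (mul_le_mul_of_nonneg_right (le_max_left _ _) hεq.le)
        calc ‖cf β ε x‖ * ‖If β ε x‖ ≤ Mf β * (max (Cf β) 0 * ε ^ q) :=
              mul_le_mul h1 h2 (norm_nonneg _) (hMf0 β)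
          _ = (Mf β * max (Cf β) 0) * ε ^ q := by ring
    _ = (∑ β ∈ D.erase 0, Mf β * max (Cf β) 0) * ε ^ q := (Finset.sum_mul _ _ _).symm
end
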